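/- Let A be an n×n matrix with entries in a totally ordered commutative group. A cover (μ, ν) of A (vectors with a_{i,j} ≤ μ_i + ν_j for all i,j) is minimal (i.e., minimizes Σ_i (μ_i + ν_i)) if and only if there exists a permutation σ of [1,n] such that a_{i,σ(i)} = μ_i + ν_{σ(i)} for all i. In this case Σ_i (μ_i + ν_i) = 𝒪_A, the tropical determinant of A. -/

import Mathlib

/-- The tropical determinant of an `n × n` matrix over a totally ordered
commutative group: the maximal transversal sum over all permutations. -/
def tropDet {n : ℕ} {M : Type*} [AddCommGroup M] [LinearOrder M] [IsOrderedAddMonoid M]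
    (A : Fin n → Fin n → M) : M :=
  Finset.univ.sup' ⟨1, Finset.mem_univ 1⟩
    fun σ : Equiv.Perm (Fin n) => ∑ i, A i (σ i)

/-- `(μ, ν)` is a cover of `A`: `a_{i,j} ≤ μ_i + ν_j` for all `i, j`. -/
def IsCover {n : ℕ} {M : Type*} [AddCommGroup M] [LinearOrder M] [IsOrderedAddMonoid M]
    (A : Fin n → Fin n → M) (μ ν : Fin n → M) : Prop :=
  ∀ i j, A i j ≤ μ i + ν j

/-- A cover is minimal when it minimizes `∑ i, (μ i + ν i)` among all covers. -/
def IsMinimalCover {n : ℕ} {M : Type*} [AddCommGroup M] [LinearOrder M] [IsOrderedAddMonoid M]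
    (A : Fin n → Fin n → M) (μ ν : Fin n → M) : Prop :=
  IsCover A μ ν ∧
    ∀ μ' ν', IsCover A μ' ν' → ∑ i, (μ i + ν i) ≤ ∑ i, (μ' i + ν' i)

/-!
A transversal sum `∑ i, a_{i,σ(i)}` is at most the weight `∑ i, (μ_i + ν_i)` of any cover, with
equality exactly when `σ` runs through tight entries `a_{i,j} = μ_i + ν_j`; this gives one direction
and the value `𝒪_A`. Conversely, if a minimal cover admitted no tight transversal, Hall's theorem
would give a set `s` of rows whose tight columns form a smaller set `T`. Lowering `μ` on `s` and
raising `ν` on `T` by the least slack between `s` and the complement of `T` yields a cover of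
weight smaller by `(#s - #T) • ε`, contradicting minimality.
-/

open Finset

section

variable {n : ℕ} {M : Type*} [AddCommGroup M]

lemma sum_add_comp_perm (μ ν : Fin n → M) (σ : Equiv.Perm (Fin n)) :
    ∑ i, (μ i + ν (σ i)) = ∑ i, (μ i + ν i) := by
  rw [sum_add_distrib, sum_add_distrib, Equiv.sum_comp σ ν]

lemma sum_shift (μ ν : Fin n → M) (s T : Finset (Fin n)) (ε : M) :
    ∑ i, ((μ i - if i ∈ s then ε else 0) + (ν i + if i ∈ T then ε else 0)) =
      ∑ i, (μ i + ν i) - #s • ε + #T • ε := by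
  have hind : ∀ u : Finset (Fin n), ∑ i, (if i ∈ u then ε else 0) = #u • ε := fun u => by
    rw [sum_ite_mem, univ_inter, sum_const]
  rw [← hind s, ← hind T, ← sum_sub_distrib, ← sum_add_distrib]
  exact sum_congr rfl fun i _ => by abel

lemma sum_eq_of_tight {A : Fin n → Fin n → M} {μ ν : Fin n → M} {σ : Equiv.Perm (Fin n)}
    (hσ : ∀ i, A i (σ i) = μ i + ν (σ i)) :
    ∑ i, (μ i + ν i) = ∑ i, A i (σ i) := by
  rw [← sum_add_comp_perm μ ν σ]
  exact sum_congr rfl fun i _ => (hσ i).symm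

variable [LinearOrder M] [IsOrderedAddMonoid M] {A : Fin n → Fin n → M} {μ ν : Fin n → M}

lemma IsCover.sum_le (h : IsCover A μ ν) (σ : Equiv.Perm (Fin n)) :
    ∑ i, A i (σ i) ≤ ∑ i, (μ i + ν i) :=
  sum_add_comp_perm μ ν σ ▸ sum_le_sum fun i _ => h i (σ i)

lemma IsCover.tropDet_le (h : IsCover A μ ν) : tropDet A ≤ ∑ i, (μ i + ν i) :=
  sup'_le _ _ fun σ _ => h.sum_le σ

lemma IsCover.isMinimalCover_of_tight (h : IsCover A μ ν) {σ : Equiv.Perm (Fin n)}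
    (hσ : ∀ i, A i (σ i) = μ i + ν (σ i)) : IsMinimalCover A μ ν :=
  ⟨h, fun _ _ h' => sum_eq_of_tight hσ ▸ h'.sum_le σ⟩

lemma IsCover.shift (h : IsCover A μ ν) (s T : Finset (Fin n)) {ε : M} (hε : 0 ≤ ε)
    (hslack : ∀ i ∈ s, ∀ j ∉ T, ε ≤ μ i + ν j - A i j) :
    IsCover A (fun i => μ i - if i ∈ s then ε else 0) (fun j => ν j + if j ∈ T then ε else 0) := by
  intro i j
  by_cases hi : i ∈ s <;> by_cases hj : j ∈ T <;> simp only [hi, hj, if_true, if_false]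
  · simpa using h i j
  · calc A i j ≤ μ i + ν j - ε := le_sub_comm.mpr (hslack i hi j hj)
      _ = μ i - ε + (ν j + 0) := by abel
  · simpa [← add_assoc] using le_add_of_le_of_nonneg (h i j) hε
  · simpa using h i j

lemma IsMinimalCover.card_le_card_of_tight_mem (hmin : IsMinimalCover A μ ν)
    (s T : Finset (Fin n)) (hT : ∀ i ∈ s, ∀ j, A i j = μ i + ν j → j ∈ T) : #s ≤ #T := by
  by_contra! hlt
  have hs : #s ≤ n := by simpa using card_le_univ s
  have hne : (s ×ˢ Tᶜ).Nonempty := (card_pos.mp (by omega)).product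
    (card_pos.mp (by rw [card_compl, Fintype.card_fin]; omega))
  obtain ⟨⟨i₀, j₀⟩, hp₀, hmin₀⟩ :=
    exists_min_image (s ×ˢ Tᶜ) (fun p => μ p.1 + ν p.2 - A p.1 p.2) hne
  rw [mem_product, mem_compl] at hp₀
  set ε := μ i₀ + ν j₀ - A i₀ j₀
  have hε : 0 < ε :=
    sub_pos.mpr <| (hmin.1 i₀ j₀).lt_of_ne fun htight => hp₀.2 (hT i₀ hp₀.1 j₀ htight)
  have hshift := hmin.1.shift s T hε.le fun i hi j hj =>
    hmin₀ (i, j) (mem_product.mpr ⟨hi, mem_compl.mpr hj⟩)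
  have hle := hmin.2 _ _ hshift
  rw [sum_shift] at hle
  rw [sub_add_eq_add_sub, le_sub_iff_add_le, add_le_add_iff_left] at hle
  exact hle.not_gt (nsmul_lt_nsmul_left hε hlt)

lemma IsMinimalCover.exists_perm_tight (hmin : IsMinimalCover A μ ν) :
    ∃ σ : Equiv.Perm (Fin n), ∀ i, A i (σ i) = μ i + ν (σ i) := by
  classical
  let tight : Fin n → Finset (Fin n) := fun i => {j | A i j = μ i + ν j}
  have hall : ∀ s : Finset (Fin n), #s ≤ #(s.biUnion tight) := fun s =>
    hmin.card_le_card_of_tight_mem s _ fun i hi j hj =>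
      mem_biUnion.mpr ⟨i, hi, mem_filter.mpr ⟨mem_univ j, hj⟩⟩
  obtain ⟨f, hinj, hf⟩ := (all_card_le_biUnion_card_iff_exists_injective tight).mp hall
  exact ⟨Equiv.ofBijective f (Finite.injective_iff_bijective.mp hinj),
    fun i => (mem_filter.mp (hf i)).2⟩

end

/-- A cover `(μ, ν)` of `A` is minimal iff some permutation `σ` satisfies
`a_{i,σ(i)} = μ_i + ν_{σ(i)}` for all `i`; in this case
`∑ i (μ_i + ν_i)` equals the tropical determinant of `A`. -/
theorem minimalCover_iff_exists_perm {n : ℕ} {M : Type*}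
    [AddCommGroup M] [LinearOrder M] [IsOrderedAddMonoid M] (A : Fin n → Fin n → M) (μ ν : Fin n → M)
    (hcov : IsCover A μ ν) :
    (IsMinimalCover A μ ν ↔
        ∃ σ : Equiv.Perm (Fin n), ∀ i, A i (σ i) = μ i + ν (σ i)) ∧
      (IsMinimalCover A μ ν → ∑ i, (μ i + ν i) = tropDet A) := by
  refine ⟨⟨IsMinimalCover.exists_perm_tight, fun ⟨σ, hσ⟩ => hcov.isMinimalCover_of_tight hσ⟩,
    fun hmin => ?_⟩
  obtain ⟨σ, hσ⟩ := hmin.exists_perm_tight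
  refine le_antisymm ?_ hcov.tropDet_le
  rw [sum_eq_of_tight hσ]
  exact le_sup' (fun τ : Equiv.Perm (Fin n) => ∑ i, A i (τ i)) (mem_univ σ)
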